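/- For n ≥ 1, α ≥ 1/2, and ξ, rₙ > 0: Γ(αn)·(ξnrₙ)^{ξnrₙ}·e^{−ξnrₙ}/Γ(αn + ξnrₙ) ≤ 2·√(1+2ξrₙ)·exp{−n·α·Ψ(ξrₙ/α)}, where Ψ(t) = (1+t)·H₂(1/(1+t)) with H₂ the binary entropy function in nats. -/

import Mathlib

/-!
Write `L z = log Γ(z) - (z - 1/2) log z + z`. Since
`a Ψ(x/a) = (a+x) log (a+x) - a log a - x log x`, the inequality for `a = αn`, `x = ξnr` amounts to
`L a - L (a + x) ≤ log 2`, together with `1 + x/a ≤ 1 + 2ξr`.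

A unit step changes `L` by `L z - L (z+1) = (z + 1/2) log (1 + 1/z) - 1`, which lies between `0` and
`1/(4z) - 1/(4(z+1))` by the elementary bounds `2/(2z+1) ≤ log (1 + 1/z)` and
`log y ≤ (y - 1/y)/2`. A fractional step `t ∈ [0, 1]` costs at most `t/(2w)` by log-convexity
of `Γ`. Going from `a` up by `⌊x⌋ + 1` unit steps, then by the fractional part of `x`, lands at
`a + x + 1`, and `L (a + x + 1) ≤ L (a + x)`; hence
`L a - L (a + x) ≤ 1/(4a) + 1/(4(a+1)) ≤ 2/3 < log 2`.
-/

open Real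

/-- `Ψ(t) = (1+t)·H₂(1/(1+t)) = (1+t)log(1+t) − t·log t` (binary entropy in nats). -/
noncomputable def Psi (t : ℝ) : ℝ := (1 + t) * Real.log (1 + t) - t * Real.log t

lemma two_div_two_mul_add_one_le_log_one_add_inv {z : ℝ} (hz : 0 < z) :
    2 / (2 * z + 1) ≤ log (1 + z⁻¹) := by
  have h := le_hasSum (hasSum_log_one_add_inv hz) 0 fun j _ => by positivity
  simpa [div_eq_mul_inv] using h

lemma log_le_sub_inv_div_two {x : ℝ} (hx : 1 ≤ x) : log x ≤ (x - x⁻¹) / 2 := by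
  have h := (self_le_sinh_iff (x := log x)).2 (log_nonneg hx)
  rwa [sinh_eq, exp_neg, exp_log (by linarith)] at h

-- Tends to `log √(2π)` by Stirling's formula.
noncomputable def logStirlingGamma (z : ℝ) : ℝ := log (Gamma z) - (z - 1 / 2) * log z + z

lemma logStirlingGamma_sub_add_one {z : ℝ} (hz : 0 < z) :
    logStirlingGamma z - logStirlingGamma (z + 1) = (z + 1 / 2) * log (1 + z⁻¹) - 1 := by
  rw [logStirlingGamma, logStirlingGamma, Gamma_add_one hz.ne',
    log_mul hz.ne' (Gamma_pos_of_pos hz).ne', show 1 + z⁻¹ = (z + 1) / z by field_simp,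
    log_div (by positivity) hz.ne']
  ring

lemma logStirlingGamma_add_one_le {z : ℝ} (hz : 0 < z) :
    logStirlingGamma (z + 1) ≤ logStirlingGamma z := by
  have h := two_div_two_mul_add_one_le_log_one_add_inv hz
  have key : 1 ≤ (z + 1 / 2) * log (1 + z⁻¹) := by
    calc (1 : ℝ) = (z + 1 / 2) * (2 / (2 * z + 1)) := by field_simp
      _ ≤ _ := by gcongr
  linarith [logStirlingGamma_sub_add_one hz]

lemma logStirlingGamma_le_add_one {z : ℝ} (hz : 0 < z) :
    logStirlingGamma z - (4 * z)⁻¹ ≤ logStirlingGamma (z + 1) - (4 * (z + 1))⁻¹ := by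
  have h := log_le_sub_inv_div_two (x := 1 + z⁻¹) (le_add_of_nonneg_right (by positivity))
  have key : (z + 1 / 2) * log (1 + z⁻¹) - 1 ≤ (4 * z)⁻¹ - (4 * (z + 1))⁻¹ := by
    calc (z + 1 / 2) * log (1 + z⁻¹) - 1 ≤ (z + 1 / 2) * ((1 + z⁻¹ - (1 + z⁻¹)⁻¹) / 2) - 1 := by
          gcongr
      _ = (4 * z)⁻¹ - (4 * (z + 1))⁻¹ := by field_simp; ring
  linarith [logStirlingGamma_sub_add_one hz]

lemma logStirlingGamma_le_add_nat {z : ℝ} (hz : 0 < z) (n : ℕ) :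
    logStirlingGamma z - (4 * z)⁻¹ ≤ logStirlingGamma (z + n) - (4 * (z + n))⁻¹ := by
  have : Monotone fun n : ℕ => logStirlingGamma (z + n) - (4 * (z + n))⁻¹ :=
    monotone_nat_of_le_succ fun n => by
      simpa [add_assoc] using logStirlingGamma_le_add_one (z := z + n) (by positivity)
  simpa using this (Nat.zero_le n)

lemma logStirlingGamma_sub_le_of_le_one {w t : ℝ} (hw : 0 < w) (ht₀ : 0 ≤ t) (ht₁ : t ≤ 1) :
    logStirlingGamma w - logStirlingGamma (w + t) ≤ t / (2 * w) := by
  have hwt : 0 < w + t := by linarith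
  -- `w + 1` is the convex combination `t • (w + t) + (1 - t) • (w + t + 1)`
  have hconv := convexOn_log_Gamma.2 (Set.mem_Ioi.2 hwt)
    (Set.mem_Ioi.2 (by linarith : 0 < w + t + 1)) ht₀ (by linarith : 0 ≤ 1 - t) (by ring)
  simp only [Function.comp, smul_eq_mul] at hconv
  rw [show t * (w + t) + (1 - t) * (w + t + 1) = w + 1 by ring, Gamma_add_one hw.ne',
    Gamma_add_one hwt.ne', log_mul hw.ne' (Gamma_pos_of_pos hw).ne',
    log_mul hwt.ne' (Gamma_pos_of_pos hwt).ne'] at hconv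
  have hlog : log (w + t) - log w ≤ t / w := by
    have := log_le_sub_one_of_pos (show 0 < (w + t) / w by positivity)
    rwa [log_div hwt.ne' hw.ne', show (w + t) / w - 1 = t / w by field_simp; ring] at this
  have : (w + 1 / 2) * (log (w + t) - log w) ≤ (w + 1 / 2) * (t / w) := by gcongr
  rw [logStirlingGamma, logStirlingGamma]
  have : (w + 1 / 2) * (t / w) = t + t / (2 * w) := by field_simp
  linarith

lemma logStirlingGamma_sub_le {z x : ℝ} (hz : 0 < z) (hx : 0 ≤ x) :
    logStirlingGamma z - logStirlingGamma (z + x) ≤ (4 * z)⁻¹ + (4 * (z + 1))⁻¹ := by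
  set m := ⌊x⌋₊
  set w := z + (m + 1 : ℕ)
  have hw : z + 1 ≤ w := by simp [w]
  have hw₀ : 0 < w := by linarith
  have ht₀ : 0 ≤ x - m := sub_nonneg.2 (Nat.floor_le hx)
  have ht₁ : x - m ≤ 1 := by linarith [Nat.lt_floor_add_one x]
  have hshift : logStirlingGamma (w + (x - m)) ≤ logStirlingGamma (z + x) := by
    have := logStirlingGamma_add_one_le (z := z + x) (by linarith)
    rwa [show z + x + 1 = w + (x - m) by push_cast [w]; ring] at this
  have hfrac := logStirlingGamma_sub_le_of_le_one hw₀ ht₀ ht₁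
  have hint := logStirlingGamma_le_add_nat hz (m + 1)
  have : (x - m) / (2 * w) ≤ 2 * (4 * w)⁻¹ := by
    rw [div_le_iff₀ (by positivity)]; field_simp; linarith
  have : (4 * w)⁻¹ ≤ (4 * (z + 1))⁻¹ := by gcongr
  linarith

lemma mul_Psi_div {a x : ℝ} (ha : 0 < a) (hx : 0 < x) :
    a * Psi (x / a) = (a + x) * log (a + x) - a * log a - x * log x := by
  rw [Psi, show 1 + x / a = (a + x) / a by field_simp, log_div (by linarith) ha.ne',
    log_div hx.ne' ha.ne']
  field_simp
  ring

lemma Gamma_mul_rpow_div_Gamma_add_le {a x : ℝ} (ha : 1 / 2 ≤ a) (hx : 0 < x) :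
    Gamma a * x ^ x * exp (-x) / Gamma (a + x)
      ≤ 2 * √(1 + x / a) * exp (-(a * Psi (x / a))) := by
  have ha₀ : 0 < a := by linarith
  have hax : 0 < a + x := by linarith
  have hL : logStirlingGamma a - logStirlingGamma (a + x) ≤ log 2 := by
    have := logStirlingGamma_sub_le ha₀ hx.le
    have : (4 * a)⁻¹ + (4 * (a + 1))⁻¹ ≤ 2 / 3 :=
      calc (4 * a)⁻¹ + (4 * (a + 1))⁻¹ ≤ (4 * (1 / 2))⁻¹ + (4 * (1 / 2 + 1))⁻¹ := by gcongr
        _ = 2 / 3 := by norm_num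
    linarith [log_two_gt_d9]
  rw [← log_le_log_iff (by positivity) (by positivity), log_div (by positivity) (by positivity),
    log_mul (by positivity) (by positivity), log_mul (by positivity) (by positivity),
    log_mul (by positivity) (by positivity), log_mul (by positivity) (by positivity), log_rpow hx,
    log_exp, log_exp, log_sqrt (by positivity), show 1 + x / a = (a + x) / a by field_simp,
    log_div hax.ne' ha₀.ne']
  rw [logStirlingGamma, logStirlingGamma] at hL
  linarith [mul_Psi_div ha₀ hx]

theorem stmt_18 (n : ℕ) (hn : 1 ≤ n) (α ξ r : ℝ) (hα : 1/2 ≤ α) (hξ : 0 < ξ) (hr : 0 < r) :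
    Real.Gamma (α * n) * (ξ * n * r) ^ (ξ * n * r) * Real.exp (-(ξ * n * r)) /
        Real.Gamma (α * n + ξ * n * r)
      ≤ 2 * Real.sqrt (1 + 2 * ξ * r) * Real.exp (-(n * α * Psi (ξ * r / α))) := by
  have hn₁ : (1 : ℝ) ≤ n := by exact_mod_cast hn
  have hα₀ : 0 < α := by linarith
  have hratio : ξ * n * r / (α * n) = ξ * r / α := by field_simp
  have hbound := Gamma_mul_rpow_div_Gamma_add_le (a := α * n) (x := ξ * n * r)
    (by nlinarith) (by positivity)
  rw [hratio] at hbound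
  have hsqrt : 1 + ξ * r / α ≤ 1 + 2 * ξ * r := by
    rw [add_le_add_iff_left, div_le_iff₀ hα₀]
    nlinarith [mul_pos hξ hr]
  calc _ ≤ 2 * √(1 + ξ * r / α) * exp (-(α * n * Psi (ξ * r / α))) := hbound
    _ ≤ _ := by rw [mul_comm α]; gcongr
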